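/- Let G = (N, Σ, R) be a first-order grammar with maximal nonterminal arity m and height-increase constant hinc. For every nonterminal A ∈ N and every i ∈ {1,…,ar(A)}: if there exists a word w ∈ Σ* with A(x1,…,x_{ar(A)}) →_w x_i in L_G, then there exists such a word of length at most (2 + hinc)^{|N|·m}; hence the maximal length d0 of shortest sink words satisfies d0 ≤ 1 + (2 + hinc)^{|N|·m}. -/

import Mathlib

open scoped ENat

noncomputable section

namespace FOG

/-- A node label: a nonterminal or a variable (variable `x_{i+1}` has index `i`). -/
abbrev Sym (Nt : Type) := Nt ⊕ ℕ

/-- A (pre)term over the nonterminals `Nt` and the variables, given by its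
(partial) labelling of tree positions; possibly infinite terms are allowed. -/
abbrev PreTerm (Nt : Type) := List ℕ → Option (Sym Nt)

variable {Nt : Type}

/-- the term consisting of the single variable `x_{i+1}` -/
def varPre (i : ℕ) : PreTerm Nt := fun p => if p = [] then some (Sum.inr i) else none

/-- the subterm of `E` rooted at position `p` -/
def subAt (E : PreTerm Nt) (p : List ℕ) : PreTerm Nt := fun q => E (p ++ q)

/-- the positions (nodes) of a term -/
def positions (E : PreTerm Nt) : Set (List ℕ) := {p | E p ≠ none}

/-- the set of subterms of a term -/
def subterms (E : PreTerm Nt) : Set (PreTerm Nt) := {F | ∃ p, E p ≠ none ∧ F = subAt E p}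

/-- the size `|E|` of a term: its number of distinct subterms -/
def size1 (E : PreTerm Nt) : ℕ := (subterms E).ncard

/-- `|E,F|`: the number of distinct subterms of `E` and `F` together -/
def size2 (E F : PreTerm Nt) : ℕ := (subterms E ∪ subterms F).ncard

/-- the set of (indices of) variables occurring in a term -/
def varsOf (E : PreTerm Nt) : Set ℕ := {i | ∃ p, E p = some (Sum.inr i)}

/-- `vars(E,F)` -/
def vars2 (E F : PreTerm Nt) : Set ℕ := varsOf E ∪ varsOf F

/-- the number of distinct subterms of `E` whose root label is a nonterminal -/
def ntcount (E : PreTerm Nt) : ℕ :=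
  {F | F ∈ subterms E ∧ ∃ A : Nt, F [] = some (Sum.inl A)}.ncard

/-- the height of a (finite) term -/
def heightP (E : PreTerm Nt) : ℕ := sSup {n | ∃ p ∈ positions E, p.length = n}

/-- Well-formedness: the root is labelled, and a child position `p ++ [i]` is
labelled iff `p` carries a nonterminal of arity `> i`; variables are leaves. -/
def IsTerm (ar : Nt → ℕ) (E : PreTerm Nt) : Prop :=
  E [] ≠ none ∧ ∀ p i, (E (p ++ [i]) ≠ none ↔ ∃ A, E p = some (Sum.inl A) ∧ i < ar A)

/-- a regular term: a term with finitely many distinct subterms -/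
def IsRegTerm (ar : Nt → ℕ) (E : PreTerm Nt) : Prop := IsTerm ar E ∧ (subterms E).Finite

/-- a finite term -/
def IsFinTerm (ar : Nt → ℕ) (E : PreTerm Nt) : Prop := IsTerm ar E ∧ (positions E).Finite

/-- does an (optional) label carry a variable? -/
def isVarLabel : Option (Sym Nt) → Bool
  | some (Sum.inr _) => true
  | _ => false

/-- The term `Eσ` obtained by applying the substitution `σ` to `E`:  at a position
`p = p₁ ++ p₂` where `p₁` is the (unique, if any) prefix of `p` at which `E` carries
a variable `x`, the label is that of `σ(x)` at `p₂`; elsewhere it is that of `E`. -/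
def substPre (E : PreTerm Nt) (σ : ℕ → PreTerm Nt) : PreTerm Nt := fun p =>
  match (List.range (p.length + 1)).find? (fun k => isVarLabel (E (p.take k))) with
  | some k =>
    match E (p.take k) with
    | some (Sum.inr i) => σ i (p.drop k)
    | _ => none
  | none => E p

/-- the term `A(x_1,…,x_k)σ`, whose root is `A` and whose `j`-th child is `σ(x_{j+1})` -/
def headTerm (A : Nt) (k : ℕ) (σ : ℕ → PreTerm Nt) : PreTerm Nt := fun p =>
  match p with
  | [] => some (Sum.inl A)
  | j :: p' => if j < k then σ j p' else none

/-- a rule `A(x_1,…,x_{ar(A)}) →_a E` of a first-order grammar -/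
structure GRule (Nt Act : Type) where
  lhsA : Nt
  act : Act
  rhs : PreTerm Nt

/-- a first-order grammar `G = (N, Σ, R)` -/
structure Grammar where
  Nt : Type
  Act : Type
  ar : Nt → ℕ
  rules : Set (GRule Nt Act)

/-- Well-formedness of a first-order grammar: the ranked alphabet `N` and the action
alphabet `Σ` are finite, there are finitely many rules, and each right-hand side is a
finite term all of whose variables are among `x_1, …, x_{ar(A)}` for the
left-hand-side nonterminal `A`. -/
def Grammar.WF (G : Grammar) : Prop :=
  Finite G.Nt ∧ Finite G.Act ∧ G.rules.Finite ∧
    ∀ r ∈ G.rules, IsFinTerm G.ar r.rhs ∧ varsOf r.rhs ⊆ {i | i < G.ar r.lhsA}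

/-- The transition relation of the labelled transition system `L_G`: each rule
`A(x_1,…,x_{ar(A)}) →_a E` induces `A(x_1,…,x_{ar(A)})σ →_a Eσ` for every
substitution `σ`. -/
def gstepP (G : Grammar) (a : G.Act) (E F : PreTerm G.Nt) : Prop :=
  ∃ r ∈ G.rules, r.act = a ∧
    ∃ σ : ℕ → PreTerm G.Nt, E = headTerm r.lhsA (G.ar r.lhsA) σ ∧ F = substPre r.rhs σ

/-- The transition relation of `L_G` augmented with a self-loop `x →_{a_x} x` with
a fresh action `a_x` for every variable `x` (so that `el(x,E) = 0` for `E ≠ x`). -/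
def gstepA (G : Grammar) : G.Act ⊕ ℕ → PreTerm G.Nt → PreTerm G.Nt → Prop
  | Sum.inl a => gstepP G a
  | Sum.inr i => fun E F => E = varPre i ∧ F = varPre i

section LTS

variable {Act S : Type*}

/-- `R` is a (strong) bisimulation for the transition relation `tr` -/
def IsBisim (tr : Act → S → S → Prop) (R : S → S → Prop) : Prop :=
  ∀ s t, R s t →
    (∀ a s', tr a s s' → ∃ t', tr a t t' ∧ R s' t') ∧
    (∀ a t', tr a t t' → ∃ s', tr a s s' ∧ R s' t')

/-- bisimilarity: the largest bisimulation -/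
def Bisim (tr : Act → S → S → Prop) (s t : S) : Prop := ∃ R, IsBisim tr R ∧ R s t

/-- the approximants `∼_k` of bisimilarity -/
def approx (tr : Act → S → S → Prop) : ℕ → S → S → Prop
  | 0 => fun _ _ => True
  | k + 1 => fun s t => approx tr k s t ∧
      (∀ a s', tr a s s' → ∃ t', tr a t t' ∧ approx tr k s' t') ∧
      (∀ a t', tr a t t' → ∃ s', tr a s s' ∧ approx tr k s' t')

/-- the equivalence level `el(s,t) = sup {k ∈ ℕ | s ∼_k t} ∈ ℕ ∪ {ω}` -/
def elev (tr : Act → S → S → Prop) (s t : S) : ℕ∞ :=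
  sSup {e : ℕ∞ | ∃ k : ℕ, approx tr k s t ∧ e = (k : ℕ∞)}

end LTS

/-- the size `|G|` of a grammar -/
def gsize (G : Grammar) : ℕ := ∑ᶠ r ∈ G.rules, (G.ar r.lhsA + 1 + size1 r.rhs)

/-- `m`: the maximal arity of a nonterminal -/
def maxAr (G : Grammar) : ℕ := sSup (Set.range G.ar)

/-- `hinc`: the maximal height increase in one transition step -/
def hinc (G : Grammar) : ℕ := sSup {k | ∃ r ∈ G.rules, k = heightP r.rhs - 1}

/-- `sinc`: the maximal size increase in one transition step -/
def sinc (G : Grammar) : ℕ := sSup {k | ∃ r ∈ G.rules, k = ntcount r.rhs}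

end FOG

namespace FOG

/-- the extension `→_w` of the transition relations to words `w ∈ Σ*` -/
def gsteps (G : Grammar) : List G.Act → PreTerm G.Nt → PreTerm G.Nt → Prop
  | [], E, F => E = F
  | a :: w, E, F => ∃ E', gstepP G a E E' ∧ gsteps G w E' F

/-- the term `A(x_1,…,x_{ar(A)})` -/
def stdTerm (G : Grammar) (A : G.Nt) : PreTerm G.Nt := headTerm A (G.ar A) varPre

/-- the length of a shortest `(A,i)`-sink word (`0`, i.e. `|ε|`, if none exists) -/
def sinkMin (G : Grammar) (A : G.Nt) (i : ℕ) : ℕ :=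
  sInf {L | ∃ w : List G.Act, w.length = L ∧ gsteps G w (stdTerm G A) (varPre i)}

/-- `d₀ = 1 + max_{A ∈ N, 1 ≤ i ≤ ar(A)} |w_{[A,i]}|`:
one plus the maximal length of the shortest sink words -/
def d0 (G : Grammar) : ℕ :=
  1 + sSup {L | ∃ A : G.Nt, ∃ i < G.ar A, L = sinkMin G A i}

end FOG

/-!
Let `μ(A,i)` be the length of a shortest `(A,i)`-sink word. Such a word starts with a rule
`A(x₁,…,x_{ar A}) →ₐ E` and then sinks `E`, a term of height at most `1 + hinc`, into `x_i`.
Following the path from the root of `E` down to `x_i`, the rest of the word splits into at most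
`1 + hinc` sink words of pairs `(B,j)`, each shorter than `μ(A,i)`, which may be replaced by
shortest ones. Hence `μ(A,i) ≤ (2 + hinc) · b` whenever `b ≥ 1` bounds `μ` on all pairs with
smaller `μ`; as there are at most `|N| · m` pairs, `μ ≤ (2 + hinc)^{|N|·m}`.
-/

lemma le_pow_card_of_le_mul {α : Type*} [Fintype α] (f : α → ℕ) {c : ℕ} (hc : 1 ≤ c)
    (h : ∀ s b, 1 ≤ b → (∀ t, f t < f s → f t ≤ b) → f s ≤ c * b) (s : α) :
    f s ≤ c ^ Fintype.card α := by
  classical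
  have hrank : ∀ n s, f s = n →
      f s ≤ c ^ ((Finset.univ.filter fun t => f t < f s).card + 1) := by
    intro n
    induction n using Nat.strong_induction_on with
    | _ n ih =>
      intro s hs
      rw [pow_succ']
      refine h s _ (Nat.one_le_pow _ _ hc) fun t ht => ?_
      refine (ih _ (hs ▸ ht) t rfl).trans (Nat.pow_le_pow_right hc ?_)
      refine Finset.card_lt_card ⟨fun u hu => ?_, fun hsub => ?_⟩
      · simp only [Finset.mem_filter, Finset.mem_univ, true_and] at hu ⊢
        exact hu.trans ht
      · have := hsub (by simpa using ht)
        simp at this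
  refine (hrank _ s rfl).trans (Nat.pow_le_pow_right hc ?_)
  exact Finset.card_lt_univ_of_notMem (x := s) (by simp)

namespace FOG

section Substitution

variable {Nt : Type} {ar : Nt → ℕ} {E : PreTerm Nt} {σ ρ : ℕ → PreTerm Nt}

lemma root_var_or_nonvar (E : PreTerm Nt) :
    (∃ x, E [] = some (.inr x)) ∨ isVarLabel (E []) = false := by
  rcases E [] with _ | _ | x <;> simp [isVarLabel]

/- `substPre` locates the first variable on the path to a position with `find?`; the next three
equations describe it recursively on positions instead, and everything below is proved from
them by induction on the position. -/
lemma substPre_of_root_var {x : ℕ} (h : E [] = some (.inr x)) : substPre E σ = σ x := by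
  funext p
  have hfind :
      (List.range (p.length + 1)).find? (fun k => isVarLabel (E (p.take k))) = some 0 := by
    simp [List.range_succ_eq_map, h, isVarLabel]
  simp [substPre, hfind, h]

lemma substPre_nil (h : isVarLabel (E []) = false) : substPre E σ [] = E [] := by
  simp [substPre, h]

lemma substPre_cons (h : isVarLabel (E []) = false) (j : ℕ) (p : List ℕ) :
    substPre E σ (j :: p) = substPre (subAt E [j]) σ p := by
  unfold substPre
  rw [List.length_cons, List.range_succ_eq_map, List.find?_cons_of_neg (by simpa using h),
    List.find?_map]
  have hpred : (fun k => isVarLabel (E ((j :: p).take k))) ∘ Nat.succ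
      = fun k => isVarLabel (subAt E [j] (p.take k)) := rfl
  rw [hpred]
  cases List.find? _ _ <;> rfl

lemma subAt_substPre (h : isVarLabel (E []) = false) (j : ℕ) :
    subAt (substPre E σ) [j] = substPre (subAt E [j]) σ :=
  funext (substPre_cons h j)

lemma substPre_varPre (x : ℕ) : substPre (varPre x) σ = σ x :=
  substPre_of_root_var rfl

lemma substPre_none : substPre (fun _ => none : PreTerm Nt) σ = fun _ => none := by
  funext p
  induction p with
  | nil => exact substPre_nil rfl
  | cons j p ih => rw [substPre_cons rfl]; exact ih

lemma substPre_substPre :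
    substPre (substPre E σ) ρ = substPre E (fun x => substPre (σ x) ρ) := by
  funext p
  induction p generalizing E with
  | nil =>
    rcases root_var_or_nonvar E with ⟨x, hx⟩ | hv
    · simp only [substPre_of_root_var hx]
    · have hv' : isVarLabel (substPre E σ []) = false := by rwa [substPre_nil hv]
      rw [substPre_nil hv', substPre_nil hv, substPre_nil hv]
  | cons j p ih =>
    rcases root_var_or_nonvar E with ⟨x, hx⟩ | hv
    · simp only [substPre_of_root_var hx]
    · have hv' : isVarLabel (substPre E σ []) = false := by rwa [substPre_nil hv]
      rw [substPre_cons hv', substPre_cons hv, subAt_substPre hv, ih]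

lemma varsOf_subAt (p : List ℕ) : varsOf (subAt E p) ⊆ varsOf E :=
  fun _ ⟨q, hq⟩ => ⟨p ++ q, hq⟩

lemma substPre_congr (h : ∀ x ∈ varsOf E, σ x = ρ x) : substPre E σ = substPre E ρ := by
  funext p
  induction p generalizing E with
  | nil =>
    rcases root_var_or_nonvar E with ⟨x, hx⟩ | hv
    · rw [substPre_of_root_var hx, substPre_of_root_var hx, h x ⟨[], hx⟩]
    · rw [substPre_nil hv, substPre_nil hv]
  | cons j p ih =>
    rcases root_var_or_nonvar E with ⟨x, hx⟩ | hv
    · rw [substPre_of_root_var hx, substPre_of_root_var hx, h x ⟨[], hx⟩]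
    · rw [substPre_cons hv, substPre_cons hv]
      exact ih fun x hx => h x (varsOf_subAt [j] hx)

lemma exists_mem_varsOf_of_mem_varsOf_substPre {y : ℕ} (h : y ∈ varsOf (substPre E σ)) :
    ∃ x ∈ varsOf E, y ∈ varsOf (σ x) := by
  obtain ⟨p, hp⟩ := h
  induction p generalizing E with
  | nil =>
    rcases root_var_or_nonvar E with ⟨x, hx⟩ | hv
    · rw [substPre_of_root_var hx] at hp
      exact ⟨x, ⟨[], hx⟩, [], hp⟩
    · rw [substPre_nil hv] at hp
      simp [hp, isVarLabel] at hv
  | cons j p ih =>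
    rcases root_var_or_nonvar E with ⟨x, hx⟩ | hv
    · rw [substPre_of_root_var hx] at hp
      exact ⟨x, ⟨[], hx⟩, _, hp⟩
    · rw [substPre_cons hv] at hp
      obtain ⟨x, hx, hy⟩ := ih hp
      exact ⟨x, varsOf_subAt [j] hx, hy⟩

lemma subAt_headTerm {A : Nt} {k j : ℕ} :
    subAt (headTerm A k σ) [j] = if j < k then σ j else fun _ => none := by
  funext q
  split_ifs with hj <;> simp [subAt, headTerm, hj]

lemma substPre_headTerm {A : Nt} {k : ℕ} :
    substPre (headTerm A k σ) ρ = headTerm A k (fun j => substPre (σ j) ρ) := by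
  funext p
  rcases p with _ | ⟨j, p⟩
  · exact substPre_nil rfl
  · rw [substPre_cons rfl, subAt_headTerm]
    split_ifs with hj
    · simp [headTerm, hj]
    · simp [headTerm, hj, substPre_none]

lemma headTerm_inj {A B : Nt} {k : ℕ} {τ : ℕ → PreTerm Nt}
    (h : headTerm A k σ = headTerm B k τ) : A = B ∧ ∀ j < k, σ j = τ j := by
  refine ⟨by simpa [headTerm] using congrFun h [], fun j hj => ?_⟩
  simpa [subAt_headTerm, hj] using congrArg (subAt · [j]) h

/-- The arity half of `IsTerm`; unlike `IsTerm` it passes to every `subAt E p`, even an empty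
one. -/
def RespectsArity (ar : Nt → ℕ) (E : PreTerm Nt) : Prop :=
  ∀ p i, (E (p ++ [i]) ≠ none ↔ ∃ A, E p = some (Sum.inl A) ∧ i < ar A)

lemma IsTerm.respectsArity (hE : IsTerm ar E) : RespectsArity ar E := hE.2

lemma respectsArity_subAt (hE : RespectsArity ar E) (p : List ℕ) :
    RespectsArity ar (subAt E p) :=
  fun q i => by simpa [subAt, List.append_assoc] using hE (p ++ q) i

lemma RespectsArity.exists_of_ne_none (hE : RespectsArity ar E) {p q : List ℕ} {j : ℕ}
    (h : E (p ++ j :: q) ≠ none) : ∃ A, E p = some (Sum.inl A) ∧ j < ar A := by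
  induction q generalizing p j with
  | nil => exact (hE p j).1 h
  | cons k q ih =>
    obtain ⟨B, hB, -⟩ := ih (p := p ++ [j]) (by simpa using h)
    exact (hE p j).1 (by simp [hB])

lemma RespectsArity.eq_varPre (hE : RespectsArity ar E) {x : ℕ}
    (hx : E [] = some (.inr x)) : E = varPre x := by
  funext p
  rcases p with _ | ⟨j, q⟩
  · exact hx
  · by_contra hne
    obtain ⟨A, hA, -⟩ := hE.exists_of_ne_none (p := []) (q := q) (j := j)
      (by simpa [varPre] using hne)
    simp [hx] at hA

lemma RespectsArity.eq_headTerm (hE : RespectsArity ar E) {A : Nt}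
    (hA : E [] = some (.inl A)) : E = headTerm A (ar A) (fun j => subAt E [j]) := by
  funext p
  rcases p with _ | ⟨j, q⟩
  · exact hA
  · by_cases hj : j < ar A
    · simp [headTerm, subAt, hj]
    · by_contra hne
      obtain ⟨B, hB, hjB⟩ := hE.exists_of_ne_none (p := []) (q := q) (j := j)
        (by simpa [headTerm, hj] using hne)
      simp only [hA, Option.some.injEq, Sum.inl.injEq] at hB
      exact hj (hB ▸ hjB)

lemma RespectsArity.substPre_varPre (hE : RespectsArity ar E) : substPre E varPre = E := by
  funext p
  induction p generalizing E with
  | nil =>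
    rcases root_var_or_nonvar E with ⟨x, hx⟩ | hv
    · rw [substPre_of_root_var hx, ← hE.eq_varPre hx]
    · exact substPre_nil hv
  | cons j p ih =>
    rcases root_var_or_nonvar E with ⟨x, hx⟩ | hv
    · rw [substPre_of_root_var hx, ← hE.eq_varPre hx]
    · rw [substPre_cons hv]
      exact ih (respectsArity_subAt hE [j])

lemma substPre_nil_ne_none_iff (hσ : ∀ x ∈ varsOf E, IsTerm ar (σ x)) :
    substPre E σ [] ≠ none ↔ E [] ≠ none := by
  rcases root_var_or_nonvar E with ⟨x, hx⟩ | hv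
  · simp [substPre_of_root_var hx, hx, (hσ x ⟨[], hx⟩).1]
  · rw [substPre_nil hv]

lemma respectsArity_substPre (hE : RespectsArity ar E)
    (hσ : ∀ x ∈ varsOf E, IsTerm ar (σ x)) : RespectsArity ar (substPre E σ) := by
  intro p i
  induction p generalizing E with
  | nil =>
    rcases root_var_or_nonvar E with ⟨x, hx⟩ | hv
    · rw [substPre_of_root_var hx]
      exact (hσ x ⟨[], hx⟩).2 [] i
    · rw [List.nil_append, substPre_cons hv, substPre_nil hv,
        substPre_nil_ne_none_iff fun x hx => hσ x (varsOf_subAt [i] hx)]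
      exact hE [] i
  | cons j p ih =>
    rcases root_var_or_nonvar E with ⟨x, hx⟩ | hv
    · rw [substPre_of_root_var hx]
      exact (hσ x ⟨[], hx⟩).2 _ i
    · rw [List.cons_append, substPre_cons hv, substPre_cons hv]
      exact ih (respectsArity_subAt hE [j]) fun x hx => hσ x (varsOf_subAt [j] hx)

lemma isTerm_substPre (hE : IsTerm ar E) (hσ : ∀ x ∈ varsOf E, IsTerm ar (σ x)) :
    IsTerm ar (substPre E σ) :=
  ⟨(substPre_nil_ne_none_iff hσ).2 hE.1, respectsArity_substPre hE.respectsArity hσ⟩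

lemma isTerm_subAt (hE : IsTerm ar E) {p : List ℕ} (hp : E p ≠ none) :
    IsTerm ar (subAt E p) :=
  ⟨by simpa [subAt] using hp, respectsArity_subAt hE.respectsArity p⟩

lemma IsTerm.child_ne_none (hE : IsTerm ar E) {A : Nt} (hA : E [] = some (.inl A)) {j : ℕ}
    (hj : j < ar A) : E [j] ≠ none := by
  simpa using (hE.2 [] j).2 ⟨A, hA, hj⟩

end Substitution

section Steps

variable {G : Grammar} {E F : PreTerm G.Nt} {σ : ℕ → PreTerm G.Nt} {i : ℕ}

lemma Grammar.WF.isTerm_rhs (hG : G.WF) {r : GRule G.Nt G.Act} (hr : r ∈ G.rules) :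
    IsTerm G.ar r.rhs :=
  (hG.2.2.2 r hr).1.1

lemma Grammar.WF.lt_of_mem_varsOf_rhs (hG : G.WF) {r : GRule G.Nt G.Act} (hr : r ∈ G.rules)
    {x : ℕ} (hx : x ∈ varsOf r.rhs) : x < G.ar r.lhsA :=
  (hG.2.2.2 r hr).2 hx

lemma gsteps_append {u v : List G.Act} {H : PreTerm G.Nt} (hu : gsteps G u E F)
    (hv : gsteps G v F H) : gsteps G (u ++ v) E H := by
  induction u generalizing E with
  | nil => exact (show E = F from hu) ▸ hv
  | cons a u ih =>
    obtain ⟨E', hstep, hu⟩ := hu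
    exact ⟨E', hstep, ih hu⟩

lemma not_gstepP_varPre {a : G.Act} {x : ℕ} : ¬ gstepP G a (varPre x) F := by
  rintro ⟨r, -, -, σ, h, -⟩
  simpa [varPre, headTerm] using congrFun h []

lemma eq_varPre_of_gsteps_varPre {w : List G.Act} {x : ℕ} (h : gsteps G w (varPre x) F) :
    F = varPre x := by
  rcases w with _ | ⟨a, w⟩
  · exact h.symm
  · obtain ⟨_, hstep, -⟩ := h
    exact absurd hstep not_gstepP_varPre

lemma gstepP_substPre {a : G.Act} (h : gstepP G a E F) :
    gstepP G a (substPre E σ) (substPre F σ) := by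
  obtain ⟨r, hr, ha, τ, rfl, rfl⟩ := h
  exact ⟨r, hr, ha, fun j => substPre (τ j) σ, substPre_headTerm, substPre_substPre⟩

lemma gsteps_substPre {w : List G.Act} (h : gsteps G w E F) :
    gsteps G w (substPre E σ) (substPre F σ) := by
  induction w generalizing E with
  | nil => exact congrArg (substPre · σ) h
  | cons a w ih =>
    obtain ⟨E', hstep, h⟩ := h
    exact ⟨_, gstepP_substPre hstep, ih h⟩

lemma stdTerm_ne_varPre {A : G.Nt} : stdTerm G A ≠ varPre i :=
  fun h => by simpa [stdTerm, headTerm, varPre] using congrFun h []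

lemma lt_of_mem_varsOf_stdTerm {A : G.Nt} {x : ℕ} (hx : x ∈ varsOf (stdTerm G A)) :
    x < G.ar A := by
  obtain ⟨_ | ⟨j, q⟩, hq⟩ := hx
  · cases hq
  · by_cases hj : j < G.ar A
    · rcases q with _ | _ <;> simp_all [stdTerm, headTerm, varPre]
    · simp [stdTerm, headTerm, hj] at hq

lemma isTerm_stdTerm {A : G.Nt} : IsTerm G.ar (stdTerm G A) := by
  refine ⟨by simp [stdTerm, headTerm], fun p j => ?_⟩
  rcases p with _ | ⟨k, q⟩
  · by_cases hj : j < G.ar A <;> simp [stdTerm, headTerm, varPre, hj]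
  · by_cases hk : k < G.ar A <;> simp [stdTerm, headTerm, varPre, hk]

lemma IsTerm.eq_substPre_stdTerm (hE : IsTerm G.ar E) {B : G.Nt}
    (hB : E [] = some (.inl B)) : E = substPre (stdTerm G B) (fun j => subAt E [j]) := by
  rw [stdTerm, substPre_headTerm]
  simpa only [substPre_varPre] using hE.respectsArity.eq_headTerm hB

lemma gstepP_stdTerm_rhs (hG : G.WF) {r : GRule G.Nt G.Act} (hr : r ∈ G.rules) :
    gstepP G r.act (stdTerm G r.lhsA) r.rhs :=
  ⟨r, hr, rfl, varPre, rfl, (hG.isTerm_rhs hr).respectsArity.substPre_varPre.symm⟩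

lemma exists_rule_of_gstepP_stdTerm (hG : G.WF) {a : G.Act} {A : G.Nt}
    (h : gstepP G a (stdTerm G A) F) :
    ∃ r ∈ G.rules, r.lhsA = A ∧ r.act = a ∧ F = r.rhs := by
  obtain ⟨r, hr, ha, τ, hτ, rfl⟩ := h
  obtain rfl : A = r.lhsA := by simpa [stdTerm, headTerm] using congrFun hτ []
  obtain ⟨-, hτ⟩ := headTerm_inj hτ
  refine ⟨r, hr, rfl, ha, ?_⟩
  rw [← substPre_congr fun j hj => hτ j (hG.lt_of_mem_varsOf_rhs hr hj),
    (hG.isTerm_rhs hr).respectsArity.substPre_varPre]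

lemma exists_gstepP_of_gstepP_substPre (hG : G.WF) {a : G.Act} {T : PreTerm G.Nt}
    (hE : IsTerm G.ar E) {B : G.Nt} (hB : E [] = some (.inl B))
    (h : gstepP G a (substPre E σ) T) :
    ∃ E', gstepP G a E E' ∧ T = substPre E' σ ∧
      IsTerm G.ar E' ∧ varsOf E' ⊆ varsOf E := by
  obtain ⟨r, hr, ha, τ, hτ, rfl⟩ := h
  have hE_eq := hE.respectsArity.eq_headTerm hB
  rw [hE_eq, substPre_headTerm] at hτ
  obtain rfl : B = r.lhsA := by simpa [headTerm] using congrFun hτ []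
  obtain ⟨-, hτ⟩ := headTerm_inj hτ
  refine ⟨substPre r.rhs (fun j => subAt E [j]), ⟨r, hr, ha, _, hE_eq, rfl⟩, ?_, ?_, ?_⟩
  · rw [substPre_substPre]
    exact substPre_congr fun j hj => (hτ j (hG.lt_of_mem_varsOf_rhs hr hj)).symm
  · exact isTerm_substPre (hG.isTerm_rhs hr) fun x hx =>
      isTerm_subAt hE (hE.child_ne_none hB (hG.lt_of_mem_varsOf_rhs hr hx))
  · intro y hy
    obtain ⟨x, -, hy⟩ := exists_mem_varsOf_of_mem_varsOf_substPre hy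
    exact varsOf_subAt _ hy

lemma exists_sink_split (hG : G.WF) {w : List G.Act} (hE : IsTerm G.ar E)
    (hσ : ∀ x ∈ varsOf E, IsTerm G.ar (σ x)) (hw : gsteps G w (substPre E σ) (varPre i)) :
    ∃ j ∈ varsOf E, ∃ u v, w = u ++ v ∧
      gsteps G u E (varPre j) ∧ gsteps G v (σ j) (varPre i) := by
  induction w generalizing E with
  | nil =>
    rcases hroot : E [] with _ | B | x
    · exact absurd hroot hE.1
    · have := congrFun (show substPre E σ = varPre i from hw) []
      simp [substPre_nil (E := E) (by simp [hroot, isVarLabel]), hroot, varPre] at this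
    · exact ⟨x, ⟨[], hroot⟩, [], [], rfl, hE.respectsArity.eq_varPre hroot,
        by rwa [substPre_of_root_var hroot] at hw⟩
  | cons a w ih =>
    rcases hroot : E [] with _ | B | x
    · exact absurd hroot hE.1
    · obtain ⟨T, hstep, hw⟩ := hw
      obtain ⟨E', hE'step, rfl, hE', hvars⟩ :=
        exists_gstepP_of_gstepP_substPre hG hE hroot hstep
      obtain ⟨j, hj, u, v, rfl, hu, hv⟩ := ih hE' (fun x hx => hσ x (hvars hx)) hw
      exact ⟨j, hvars hj, a :: u, v, rfl, ⟨E', hE'step, hu⟩, hv⟩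
    · exact ⟨x, ⟨[], hroot⟩, [], a :: w, rfl, hE.respectsArity.eq_varPre hroot,
        by rwa [substPre_of_root_var hroot] at hw⟩

lemma IsTerm.exists_sink_split_child (hG : G.WF) {w : List G.Act} (hE : IsTerm G.ar E)
    {B : G.Nt} (hB : E [] = some (.inl B)) (hw : gsteps G w E (varPre i)) :
    ∃ j < G.ar B, ∃ u v, w = u ++ v ∧ gsteps G u (stdTerm G B) (varPre j) ∧
      gsteps G v (subAt E [j]) (varPre i) := by
  rw [hE.eq_substPre_stdTerm hB] at hw
  obtain ⟨j, hj, u, v, rfl, hu, hv⟩ := exists_sink_split hG isTerm_stdTerm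
    (fun x hx => isTerm_subAt hE (hE.child_ne_none hB (lt_of_mem_varsOf_stdTerm hx))) hw
  exact ⟨j, lt_of_mem_varsOf_stdTerm hj, u, v, rfl, hu, hv⟩

lemma IsTerm.exists_root_eq_inl {w : List G.Act} (hE : IsTerm G.ar E)
    (hw : gsteps G w E (varPre i)) (hne : E ≠ varPre i) : ∃ B, E [] = some (.inl B) := by
  rcases hroot : E [] with _ | B | x
  · exact absurd hroot hE.1
  · exact ⟨B, rfl⟩
  · rw [hE.respectsArity.eq_varPre hroot] at hw hne
    exact absurd (eq_varPre_of_gsteps_varPre hw).symm hne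

end Steps

section SinkWords

variable {G : Grammar}

def ShortSinkWords (G : Grammar) (n c : ℕ) : Prop :=
  ∀ (B : G.Nt) (j : ℕ) (u : List G.Act), j < G.ar B → u.length ≤ n →
    gsteps G u (stdTerm G B) (varPre j) →
    ∃ u' : List G.Act, u'.length ≤ c ∧ gsteps G u' (stdTerm G B) (varPre j)

lemma ShortSinkWords.mono {n n' c : ℕ} (h : ShortSinkWords G n c) (hn : n' ≤ n) :
    ShortSinkWords G n' c :=
  fun B j u hj hu => h B j u hj (hu.trans hn)

/-- Descending along the path to the sinking variable, each level costs one sink word of the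
nonterminal there. -/
lemma exists_sink_word_le_mul (hG : G.WF) {c h : ℕ} {w : List G.Act} {E : PreTerm G.Nt}
    {i : ℕ} (hE : IsTerm G.ar E) (hh : ∀ p ∈ positions E, p.length ≤ h)
    (hw : gsteps G w E (varPre i)) (hc : ShortSinkWords G w.length c) :
    ∃ w' : List G.Act, w'.length ≤ h * c ∧ gsteps G w' E (varPre i) := by
  by_cases hEi : E = varPre i
  · exact ⟨[], Nat.zero_le _, hEi⟩
  obtain ⟨B, hB⟩ := hE.exists_root_eq_inl hw hEi
  obtain ⟨j, hj, u, v, rfl, hu, hv⟩ := hE.exists_sink_split_child hG hB hw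
  have hEj := hE.child_ne_none hB hj
  cases h with
  | zero => simpa using hh [j] hEj
  | succ h =>
    obtain ⟨u', hu'c, hu'⟩ := hc B j u hj (by simp) hu
    obtain ⟨v', hv'c, hv'⟩ := exists_sink_word_le_mul hG (isTerm_subAt hE hEj)
      (fun p hp => by simpa using hh (j :: p) hp) hv (hc.mono (by simp))
    refine ⟨u' ++ v', by rw [List.length_append, Nat.succ_mul]; omega, gsteps_append ?_ hv'⟩
    simpa only [substPre_varPre, ← hE.eq_substPre_stdTerm hB] using
      gsteps_substPre (σ := fun j => subAt E [j]) hu'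

lemma length_le_of_mem_positions_rhs (hG : G.WF) {r : GRule G.Nt G.Act} (hr : r ∈ G.rules)
    {p : List ℕ} (hp : p ∈ positions r.rhs) : p.length ≤ 1 + hinc G := by
  have hheight : p.length ≤ heightP r.rhs :=
    le_csSup ((hG.2.2.2 r hr).1.2.image List.length).bddAbove ⟨p, hp, rfl⟩
  have hinc_le : heightP r.rhs - 1 ≤ hinc G := by
    refine le_csSup ((hG.2.2.1.image fun r' => heightP r'.rhs - 1).bddAbove.mono ?_)
      ⟨r, hr, rfl⟩
    rintro _ ⟨r', hr', rfl⟩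
    exact ⟨r', hr', rfl⟩
  omega

lemma sinkMin_le {A : G.Nt} {i : ℕ} {w : List G.Act}
    (hw : gsteps G w (stdTerm G A) (varPre i)) : sinkMin G A i ≤ w.length :=
  Nat.sInf_le ⟨w, rfl, hw⟩

lemma exists_sinkMin_eq {A : G.Nt} {i : ℕ}
    (h : ∃ w : List G.Act, gsteps G w (stdTerm G A) (varPre i)) :
    ∃ w : List G.Act, w.length = sinkMin G A i ∧ gsteps G w (stdTerm G A) (varPre i) := by
  obtain ⟨w, hw⟩ := h
  exact Nat.sInf_mem (s := {L | ∃ w : List G.Act, w.length = L ∧ _}) ⟨w.length, w, rfl, hw⟩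

lemma sinkMin_le_mul (hG : G.WF) {A : G.Nt} {i b : ℕ} (hb : 1 ≤ b)
    (h : ∀ (B : G.Nt) (j : ℕ), j < G.ar B →
      sinkMin G B j < sinkMin G A i → sinkMin G B j ≤ b) :
    sinkMin G A i ≤ (2 + hinc G) * b := by
  by_cases hex : ∃ w : List G.Act, gsteps G w (stdTerm G A) (varPre i)
  swap
  · simp only [not_exists] at hex
    simp [sinkMin, hex]
  obtain ⟨_ | ⟨a, w⟩, hlen, hw⟩ := exists_sinkMin_eq hex
  · exact absurd hw stdTerm_ne_varPre
  obtain ⟨E, hstep, hw⟩ := hw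
  obtain ⟨r, hr, rfl, rfl, rfl⟩ := exists_rule_of_gstepP_stdTerm hG hstep
  have hshort : ShortSinkWords G w.length b := by
    intro B j u hj hu hsink
    have hlt : sinkMin G B j < sinkMin G r.lhsA i := by
      have := sinkMin_le hsink
      simp only [List.length_cons] at hlen
      omega
    exact (exists_sinkMin_eq ⟨u, hsink⟩).imp fun u' ⟨hu', hsink'⟩ =>
      ⟨hu' ▸ h B j hj hlt, hsink'⟩
  obtain ⟨w', hw'len, hw'⟩ := exists_sink_word_le_mul hG (hG.isTerm_rhs hr)
    (fun p hp => length_le_of_mem_positions_rhs hG hr hp) hw hshort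
  calc sinkMin G r.lhsA i ≤ (r.act :: w').length :=
        sinkMin_le ⟨_, gstepP_stdTerm_rhs hG hr, hw'⟩
    _ ≤ (2 + hinc G) * b := by simp only [List.length_cons]; nlinarith

lemma sinkMin_le_pow (hG : G.WF) {A : G.Nt} {i : ℕ} (hi : i < G.ar A) :
    sinkMin G A i ≤ (2 + hinc G) ^ (Nat.card G.Nt * maxAr G) := by
  have := hG.1
  have := Fintype.ofFinite G.Nt
  have hc : 1 ≤ 2 + hinc G := by omega
  calc sinkMin G A i ≤ (2 + hinc G) ^ Fintype.card (Σ B : G.Nt, Fin (G.ar B)) :=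
        le_pow_card_of_le_mul (fun s : Σ B : G.Nt, Fin (G.ar B) => sinkMin G s.1 s.2) hc
          (fun s b hb hs => sinkMin_le_mul hG hb fun B j hj => hs ⟨B, j, hj⟩) ⟨A, i, hi⟩
    _ ≤ (2 + hinc G) ^ (Nat.card G.Nt * maxAr G) := by
        refine Nat.pow_le_pow_right hc ?_
        rw [Fintype.card_sigma, Nat.card_eq_fintype_card]
        simpa using Finset.sum_le_card_nsmul Finset.univ (fun B => G.ar B) (maxAr G)
          fun B _ => le_csSup (Set.finite_range G.ar).bddAbove ⟨B, rfl⟩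

end SinkWords

end FOG

open FOG in
theorem short_sink_words (G : Grammar) (hG : G.WF) :
    (∀ A : G.Nt, ∀ i < G.ar A,
      (∃ w : List G.Act, gsteps G w (stdTerm G A) (varPre i)) →
      ∃ w : List G.Act,
        w.length ≤ (2 + hinc G) ^ (Nat.card G.Nt * maxAr G) ∧
        gsteps G w (stdTerm G A) (varPre i)) ∧
    d0 G ≤ 1 + (2 + hinc G) ^ (Nat.card G.Nt * maxAr G) := by
  refine ⟨fun A i hi hex => ?_, ?_⟩
  · obtain ⟨w, hlen, hw⟩ := exists_sinkMin_eq hex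
    exact ⟨w, hlen ▸ sinkMin_le_pow hG hi, hw⟩
  · have : sSup {L | ∃ A : G.Nt, ∃ i < G.ar A, L = sinkMin G A i} ≤
        (2 + hinc G) ^ (Nat.card G.Nt * maxAr G) :=
      csSup_le' fun _ ⟨A, i, hi, hL⟩ => hL ▸ sinkMin_le_pow hG hi
    unfold d0
    omega
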